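/- In any B_{q,t}-module datum, for all k, m ∈ ℤ the following identity of operators V₀ → V₀ holds: e_{k+1} ∘ e_m − t·(e_k ∘ e_{m+1}) = d₋ d₋ (q^{−1}z₁ − t z₂) z₁^{k} z₂^{m} d₊ d₊, where on the right-hand side d₊d₊ : V₀ → V₂, the operators z₁, z₂ act on V₂, and d₋d₋ : V₂ → V₀. -/

import Mathlib

/- Common setup: the field K = ℚ(q,t) and the notion of a B_{q,t}-module datum,
i.e. a family of K-vector spaces V_k (k ≥ 0) together with maps d₊ : V_k → V_{k+1},
d₋ : V_k → V_{k−1}, invertible operators z_i (1 ≤ i ≤ k) and operators T_i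
(1 ≤ i ≤ k−1) on V_k (the T_i are invertible as a consequence of the quadratic
Hecke relation, so we record them as units), subject to the defining relations
of the double Dyck path algebra 𝔹_{q,t}.  Operators compose right-to-left;
`Module.End` multiplication is composition. -/

noncomputable section

/-- The field ℚ(q,t). -/
abbrev Kq : Type := FractionRing (MvPolynomial (Fin 2) ℚ)

/-- The variable q ∈ ℚ(q,t). -/
def qv : Kq := algebraMap (MvPolynomial (Fin 2) ℚ) Kq (MvPolynomial.X 0)

/-- The variable t ∈ ℚ(q,t). -/
def tv : Kq := algebraMap (MvPolynomial (Fin 2) ℚ) Kq (MvPolynomial.X 1)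

/-- φ := (q−1)^{−1}(d₊d₋ − d₋d₊), an operator on V_{k+1}. -/
def phiE {V : ℕ → Type*} [∀ k, AddCommGroup (V k)] [∀ k, Module Kq (V k)]
    (dp : ∀ k, V k →ₗ[Kq] V (k + 1)) (dm : ∀ k, V (k + 1) →ₗ[Kq] V k) (k : ℕ) :
    Module.End Kq (V (k + 1)) :=
  (qv - 1)⁻¹ • (dp k ∘ₗ dm k - dm (k + 1) ∘ₗ dp (k + 1))

/-- A B_{q,t}-module datum on the family of K-vector spaces `V`.
`z k i` is the operator z_i on V_k (meaningful for 1 ≤ i ≤ k) and `T k i` is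
the operator T_i on V_k (meaningful for 1 ≤ i ≤ k−1); all relations are imposed
on every V_k on which all their factors are defined. -/
structure BqtDatum (V : ℕ → Type*) [∀ k, AddCommGroup (V k)] [∀ k, Module Kq (V k)] where
  /-- d₊ : V_k → V_{k+1} -/
  dp : ∀ k, V k →ₗ[Kq] V (k + 1)
  /-- d₋ : V_{k+1} → V_k -/
  dm : ∀ k, V (k + 1) →ₗ[Kq] V k
  /-- the pairwise commuting invertible operators z_1, …, z_k on V_k -/
  z : ∀ k, ℕ → (Module.End Kq (V k))ˣ
  /-- the operators T_1, …, T_{k−1} on V_k -/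
  T : ∀ k, ℕ → (Module.End Kq (V k))ˣ
  z_comm : ∀ k i j, 1 ≤ i → i ≤ k → 1 ≤ j → j ≤ k → z k i * z k j = z k j * z k i
  hecke : ∀ k i, 1 ≤ i → i + 1 ≤ k →
    ((T k i : Module.End Kq (V k)) - 1) * ((T k i : Module.End Kq (V k)) + qv • 1) = 0
  braid : ∀ k i, 1 ≤ i → i + 2 ≤ k →
    T k i * T k (i + 1) * T k i = T k (i + 1) * T k i * T k (i + 1)
  T_far : ∀ k i j, 1 ≤ i → i + 1 ≤ k → 1 ≤ j → j + 1 ≤ k → i + 1 < j →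
    T k i * T k j = T k j * T k i
  TzT : ∀ k i, 1 ≤ i → i + 1 ≤ k →
    (((T k i)⁻¹ : (Module.End Kq (V k))ˣ) : Module.End Kq (V k)) *
        (z k (i + 1) : Module.End Kq (V k)) *
        (((T k i)⁻¹ : (Module.End Kq (V k))ˣ) : Module.End Kq (V k)) =
      qv⁻¹ • (z k i : Module.End Kq (V k))
  zT_far : ∀ k i j, 1 ≤ i → i ≤ k → 1 ≤ j → j + 1 ≤ k → i ≠ j → i ≠ j + 1 →
    z k i * T k j = T k j * z k i
  dmdmT : ∀ k, (dm k ∘ₗ dm (k + 1)) ∘ₗ (T (k + 2) (k + 1) : Module.End Kq (V (k + 2))) =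
    dm k ∘ₗ dm (k + 1)
  dmT : ∀ k i, 1 ≤ i → i + 1 ≤ k →
    dm k ∘ₗ (T (k + 1) i : Module.End Kq (V (k + 1))) = (T k i : Module.End Kq (V k)) ∘ₗ dm k
  Tdpdp : ∀ k, (T (k + 2) 1 : Module.End Kq (V (k + 2))) ∘ₗ (dp (k + 1) ∘ₗ dp k) =
    dp (k + 1) ∘ₗ dp k
  dpT : ∀ k i, 1 ≤ i → i + 1 ≤ k →
    dp k ∘ₗ (T k i : Module.End Kq (V k)) = (T (k + 1) (i + 1) : Module.End Kq (V (k + 1))) ∘ₗ dp k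
  phidm : ∀ k, qv • (phiE dp dm k ∘ₗ dm (k + 1)) =
    (dm (k + 1) ∘ₗ phiE dp dm (k + 1)) ∘ₗ (T (k + 2) (k + 1) : Module.End Kq (V (k + 2)))
  Tphidp : ∀ k, (T (k + 2) 1 : Module.End Kq (V (k + 2))) ∘ₗ (phiE dp dm (k + 1) ∘ₗ dp (k + 1)) =
    qv • (dp (k + 1) ∘ₗ phiE dp dm k)
  zdm : ∀ k i, 1 ≤ i → i ≤ k →
    (z k i : Module.End Kq (V k)) ∘ₗ dm k = dm k ∘ₗ (z (k + 1) i : Module.End Kq (V (k + 1)))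
  dpz : ∀ k i, 1 ≤ i → i ≤ k →
    dp k ∘ₗ (z k i : Module.End Kq (V k)) = (z (k + 1) (i + 1) : Module.End Kq (V (k + 1))) ∘ₗ dp k
  zmain : ∀ k, (z (k + 1) 1 : Module.End Kq (V (k + 1))) ∘ₗ
      (qv • (dp k ∘ₗ dm k) - dm (k + 1) ∘ₗ dp (k + 1)) =
    (qv * tv) • ((dp k ∘ₗ dm k - dm (k + 1) ∘ₗ dp (k + 1)) ∘ₗ
      (z (k + 1) (k + 1) : Module.End Kq (V (k + 1))))

namespace BqtDatum

variable {V : ℕ → Type*} [∀ k, AddCommGroup (V k)] [∀ k, Module Kq (V k)]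

/-- e_m := d₋ z₁^m d₊ : V₀ → V₀. -/
def eOp (D : BqtDatum V) (m : ℤ) : Module.End Kq (V 0) :=
  D.dm 0 ∘ₗ ((D.z 1 1 ^ m : (Module.End Kq (V 1))ˣ) : Module.End Kq (V 1)) ∘ₗ D.dp 0

end BqtDatum

section Aux

variable {M N : Type*} [AddCommGroup M] [Module Kq M] [AddCommGroup N] [Module Kq N]

lemma conjZpowE (u : (Module.End Kq M)ˣ) (w : (Module.End Kq N)ˣ) (f : N →ₗ[Kq] M)
    (h : (u : Module.End Kq M) ∘ₗ f = f ∘ₗ (w : Module.End Kq N)) (n : ℤ) :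
    ((u ^ n : (Module.End Kq M)ˣ) : Module.End Kq M) ∘ₗ f =
      f ∘ₗ ((w ^ n : (Module.End Kq N)ˣ) : Module.End Kq N) := by
  have h1 : ∀ y, (u : Module.End Kq M) (f y) = f ((w : Module.End Kq N) y) := by
    intro y
    have := LinearMap.congr_fun h y
    simpa using this
  have hinv : ((u⁻¹ : (Module.End Kq M)ˣ) : Module.End Kq M) ∘ₗ f =
      f ∘ₗ ((w⁻¹ : (Module.End Kq N)ˣ) : Module.End Kq N) := by
    ext x
    simp only [LinearMap.comp_apply]
    have e : (w : Module.End Kq N) (((w⁻¹ : (Module.End Kq N)ˣ) : Module.End Kq N) x) = x := by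
      rw [← Module.End.mul_apply, ← Units.val_mul, mul_inv_cancel, Units.val_one,
        Module.End.one_apply]
    have e2 : ∀ y, ((u⁻¹ : (Module.End Kq M)ˣ) : Module.End Kq M)
        ((u : Module.End Kq M) y) = y := by
      intro y
      rw [← Module.End.mul_apply, ← Units.val_mul, inv_mul_cancel, Units.val_one,
        Module.End.one_apply]
    conv_lhs => rw [← e, ← h1, e2]
  induction n using Int.induction_on with
  | zero => ext x; rfl
  | succ n ih =>
    calc ((u ^ ((n : ℤ) + 1) : (Module.End Kq M)ˣ) : Module.End Kq M) ∘ₗ f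
        = ((u ^ (n : ℤ) : (Module.End Kq M)ˣ) : Module.End Kq M) ∘ₗ
            ((u : Module.End Kq M) ∘ₗ f) := by
          rw [zpow_add_one, Units.val_mul, Module.End.mul_eq_comp, LinearMap.comp_assoc]
      _ = ((u ^ (n : ℤ) : (Module.End Kq M)ˣ) : Module.End Kq M) ∘ₗ
            (f ∘ₗ (w : Module.End Kq N)) := by rw [h]
      _ = (((u ^ (n : ℤ) : (Module.End Kq M)ˣ) : Module.End Kq M) ∘ₗ f) ∘ₗ
            (w : Module.End Kq N) := by rw [LinearMap.comp_assoc]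
      _ = (f ∘ₗ ((w ^ (n : ℤ) : (Module.End Kq N)ˣ) : Module.End Kq N)) ∘ₗ
            (w : Module.End Kq N) := by rw [ih]
      _ = f ∘ₗ ((w ^ ((n : ℤ) + 1) : (Module.End Kq N)ˣ) : Module.End Kq N) := by
          rw [zpow_add_one, Units.val_mul, Module.End.mul_eq_comp, LinearMap.comp_assoc]
  | pred n ih =>
    calc ((u ^ (-(n : ℤ) - 1) : (Module.End Kq M)ˣ) : Module.End Kq M) ∘ₗ f
        = ((u ^ (-(n : ℤ)) : (Module.End Kq M)ˣ) : Module.End Kq M) ∘ₗ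
            (((u⁻¹ : (Module.End Kq M)ˣ) : Module.End Kq M) ∘ₗ f) := by
          rw [zpow_sub_one, Units.val_mul, Module.End.mul_eq_comp, LinearMap.comp_assoc]
      _ = ((u ^ (-(n : ℤ)) : (Module.End Kq M)ˣ) : Module.End Kq M) ∘ₗ
            (f ∘ₗ ((w⁻¹ : (Module.End Kq N)ˣ) : Module.End Kq N)) := by rw [hinv]
      _ = (((u ^ (-(n : ℤ)) : (Module.End Kq M)ˣ) : Module.End Kq M) ∘ₗ f) ∘ₗ
            ((w⁻¹ : (Module.End Kq N)ˣ) : Module.End Kq N) := by rw [LinearMap.comp_assoc]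
      _ = (f ∘ₗ ((w ^ (-(n : ℤ)) : (Module.End Kq N)ˣ) : Module.End Kq N)) ∘ₗ
            ((w⁻¹ : (Module.End Kq N)ˣ) : Module.End Kq N) := by rw [ih]
      _ = f ∘ₗ ((w ^ (-(n : ℤ) - 1) : (Module.End Kq N)ˣ) : Module.End Kq N) := by
          rw [zpow_sub_one, Units.val_mul, Module.End.mul_eq_comp, LinearMap.comp_assoc]

end Aux

lemma qv_ne_zero : qv ≠ 0 := by
  have : (MvPolynomial.X 0 : MvPolynomial (Fin 2) ℚ) ≠ 0 := MvPolynomial.X_ne_zero 0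
  simpa [qv] using
    (map_ne_zero_iff _ (IsFractionRing.injective (MvPolynomial (Fin 2) ℚ) Kq)).mpr this

set_option maxHeartbeats 1600000 in
open BqtDatum in
theorem stmt7 (V : ℕ → Type*) [∀ k, AddCommGroup (V k)] [∀ k, Module Kq (V k)]
    (D : BqtDatum V) (k m : ℤ) :
    eOp D (k + 1) * eOp D m - tv • (eOp D k * eOp D (m + 1)) =
      (D.dm 0 ∘ₗ D.dm 1) ∘ₗ
        ((qv⁻¹ • (D.z 2 1 : Module.End Kq (V 2)) - tv • (D.z 2 2 : Module.End Kq (V 2))) *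
          ((D.z 2 1 ^ k : (Module.End Kq (V 2))ˣ) : Module.End Kq (V 2)) *
          ((D.z 2 2 ^ m : (Module.End Kq (V 2))ˣ) : Module.End Kq (V 2))) ∘ₗ
        (D.dp 1 ∘ₗ D.dp 0) := by
  -- abbreviations
  have hZA : ∀ a b : ℤ, eOp D a * eOp D b =
      D.dm 0 ∘ₗ ((((D.z 1 1 ^ a : (Module.End Kq (V 1))ˣ) : Module.End Kq (V 1)) *
        (D.dp 0 ∘ₗ D.dm 0) *
        ((D.z 1 1 ^ b : (Module.End Kq (V 1))ˣ) : Module.End Kq (V 1))) ∘ₗ D.dp 0) := by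
    intro a b
    simp only [eOp, Module.End.mul_eq_comp, LinearMap.comp_assoc]
  -- conjugation of powers of z through d₋ and d₊
  have hzm : ∀ a : ℤ,
      ((D.z 1 1 ^ a : (Module.End Kq (V 1))ˣ) : Module.End Kq (V 1)) ∘ₗ D.dm 1 =
        D.dm 1 ∘ₗ ((D.z 2 1 ^ a : (Module.End Kq (V 2))ˣ) : Module.End Kq (V 2)) :=
    conjZpowE (D.z 1 1) (D.z 2 1) (D.dm 1) (D.zdm 1 1 le_rfl le_rfl)
  have hdpz : ∀ a : ℤ,
      ((D.z 2 2 ^ a : (Module.End Kq (V 2))ˣ) : Module.End Kq (V 2)) ∘ₗ D.dp 1 =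
        D.dp 1 ∘ₗ ((D.z 1 1 ^ a : (Module.End Kq (V 1))ˣ) : Module.End Kq (V 1)) :=
    conjZpowE (D.z 2 2) (D.z 1 1) (D.dp 1) (D.dpz 1 1 le_rfl le_rfl).symm
  -- the B-term computed on V₂
  have hB : ∀ a b : ℤ,
      D.dm 0 ∘ₗ ((((D.z 1 1 ^ a : (Module.End Kq (V 1))ˣ) : Module.End Kq (V 1)) *
          (D.dm 1 ∘ₗ D.dp 1) *
          ((D.z 1 1 ^ b : (Module.End Kq (V 1))ˣ) : Module.End Kq (V 1))) ∘ₗ D.dp 0) =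
        (D.dm 0 ∘ₗ D.dm 1) ∘ₗ
          ((((D.z 2 1 ^ a : (Module.End Kq (V 2))ˣ) : Module.End Kq (V 2)) *
            ((D.z 2 2 ^ b : (Module.End Kq (V 2))ˣ) : Module.End Kq (V 2))) ∘ₗ
          (D.dp 1 ∘ₗ D.dp 0)) := by
    intro a b
    calc D.dm 0 ∘ₗ ((((D.z 1 1 ^ a : (Module.End Kq (V 1))ˣ) : Module.End Kq (V 1)) *
          (D.dm 1 ∘ₗ D.dp 1) *
          ((D.z 1 1 ^ b : (Module.End Kq (V 1))ˣ) : Module.End Kq (V 1))) ∘ₗ D.dp 0)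
        = D.dm 0 ∘ₗ ((((D.z 1 1 ^ a : (Module.End Kq (V 1))ˣ) : Module.End Kq (V 1)) ∘ₗ D.dm 1) ∘ₗ
            ((((D.z 2 2 ^ b : (Module.End Kq (V 2))ˣ) : Module.End Kq (V 2)) ∘ₗ D.dp 1) ∘ₗ
              D.dp 0)) := by
          rw [hdpz b]
          simp only [Module.End.mul_eq_comp, LinearMap.comp_assoc]
      _ = D.dm 0 ∘ₗ ((D.dm 1 ∘ₗ ((D.z 2 1 ^ a : (Module.End Kq (V 2))ˣ) : Module.End Kq (V 2))) ∘ₗ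
            ((((D.z 2 2 ^ b : (Module.End Kq (V 2))ˣ) : Module.End Kq (V 2)) ∘ₗ D.dp 1) ∘ₗ
              D.dp 0)) := by rw [hzm a]
      _ = _ := by simp only [Module.End.mul_eq_comp, LinearMap.comp_assoc]
  -- the key relation on V₁, from zmain
  have h0 := D.zmain 0
  simp only [← Module.End.mul_eq_comp] at h0
  have hkey : ((D.z 1 1 : Module.End Kq (V 1))) * (D.dp 0 ∘ₗ D.dm 0) -
        tv • ((D.dp 0 ∘ₗ D.dm 0) * (D.z 1 1 : Module.End Kq (V 1))) =
      qv⁻¹ • ((D.z 1 1 : Module.End Kq (V 1)) * (D.dm 1 ∘ₗ D.dp 1)) -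
        tv • ((D.dm 1 ∘ₗ D.dp 1) * (D.z 1 1 : Module.End Kq (V 1))) := by
    have h1 : qv • ((D.z 1 1 : Module.End Kq (V 1)) * (D.dp 0 ∘ₗ D.dm 0)) -
          (D.z 1 1 : Module.End Kq (V 1)) * (D.dm 1 ∘ₗ D.dp 1) =
        (qv * tv) • ((D.dp 0 ∘ₗ D.dm 0) * (D.z 1 1 : Module.End Kq (V 1))) -
          (qv * tv) • ((D.dm 1 ∘ₗ D.dp 1) * (D.z 1 1 : Module.End Kq (V 1))) := by
      rw [← smul_sub, ← sub_mul, ← h0, mul_sub, mul_smul_comm]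
    have h2 : qv • ((D.z 1 1 : Module.End Kq (V 1)) * (D.dp 0 ∘ₗ D.dm 0) -
          tv • ((D.dp 0 ∘ₗ D.dm 0) * (D.z 1 1 : Module.End Kq (V 1)))) =
        qv • (qv⁻¹ • ((D.z 1 1 : Module.End Kq (V 1)) * (D.dm 1 ∘ₗ D.dp 1)) -
          tv • ((D.dm 1 ∘ₗ D.dp 1) * (D.z 1 1 : Module.End Kq (V 1)))) := by
      simp only [smul_sub, smul_smul, mul_inv_cancel₀ qv_ne_zero, one_smul]
      rw [sub_eq_sub_iff_sub_eq_sub]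
      exact h1
    have h3 := congrArg (fun x => qv⁻¹ • x) h2
    simpa only [inv_smul_smul₀ qv_ne_zero] using h3
  -- expansion identities on V₁
  have e1 : (D.z 1 1 ^ (k + 1) : (Module.End Kq (V 1))ˣ) = D.z 1 1 ^ k * D.z 1 1 :=
    zpow_add_one (D.z 1 1) k
  have e2 : (D.z 1 1 ^ (m + 1) : (Module.End Kq (V 1))ˣ) = D.z 1 1 * D.z 1 1 ^ m := by
    rw [add_comm, zpow_add, zpow_one]
  have expand : ∀ X : Module.End Kq (V 1),
      (((D.z 1 1 ^ k : (Module.End Kq (V 1))ˣ) : Module.End Kq (V 1)) *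
          (D.z 1 1 : Module.End Kq (V 1))) * X *
          ((D.z 1 1 ^ m : (Module.End Kq (V 1))ˣ) : Module.End Kq (V 1)) -
        tv • (((D.z 1 1 ^ k : (Module.End Kq (V 1))ˣ) : Module.End Kq (V 1)) * X *
          ((D.z 1 1 : Module.End Kq (V 1)) *
            ((D.z 1 1 ^ m : (Module.End Kq (V 1))ˣ) : Module.End Kq (V 1)))) =
      ((D.z 1 1 ^ k : (Module.End Kq (V 1))ˣ) : Module.End Kq (V 1)) *
        ((D.z 1 1 : Module.End Kq (V 1)) * X - tv • (X * (D.z 1 1 : Module.End Kq (V 1)))) *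
        ((D.z 1 1 ^ m : (Module.End Kq (V 1))ˣ) : Module.End Kq (V 1)) := by
    intro X
    simp only [mul_sub, sub_mul, mul_smul_comm, smul_mul_assoc, mul_assoc]
  have expand2 : ∀ X : Module.End Kq (V 1),
      ((D.z 1 1 ^ k : (Module.End Kq (V 1))ˣ) : Module.End Kq (V 1)) *
        (qv⁻¹ • ((D.z 1 1 : Module.End Kq (V 1)) * X) -
          tv • (X * (D.z 1 1 : Module.End Kq (V 1)))) *
        ((D.z 1 1 ^ m : (Module.End Kq (V 1))ˣ) : Module.End Kq (V 1)) =
      qv⁻¹ • ((((D.z 1 1 ^ k : (Module.End Kq (V 1))ˣ) : Module.End Kq (V 1)) *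
          (D.z 1 1 : Module.End Kq (V 1))) * X *
          ((D.z 1 1 ^ m : (Module.End Kq (V 1))ˣ) : Module.End Kq (V 1))) -
        tv • (((D.z 1 1 ^ k : (Module.End Kq (V 1))ˣ) : Module.End Kq (V 1)) * X *
          ((D.z 1 1 : Module.End Kq (V 1)) *
            ((D.z 1 1 ^ m : (Module.End Kq (V 1))ˣ) : Module.End Kq (V 1)))) := by
    intro X
    simp only [mul_sub, sub_mul, mul_smul_comm, smul_mul_assoc, mul_assoc]
  have hinner :
      ((D.z 1 1 ^ (k + 1) : (Module.End Kq (V 1))ˣ) : Module.End Kq (V 1)) *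
          (D.dp 0 ∘ₗ D.dm 0) *
          ((D.z 1 1 ^ m : (Module.End Kq (V 1))ˣ) : Module.End Kq (V 1)) -
        tv • (((D.z 1 1 ^ k : (Module.End Kq (V 1))ˣ) : Module.End Kq (V 1)) *
          (D.dp 0 ∘ₗ D.dm 0) *
          ((D.z 1 1 ^ (m + 1) : (Module.End Kq (V 1))ˣ) : Module.End Kq (V 1))) =
      qv⁻¹ • (((D.z 1 1 ^ (k + 1) : (Module.End Kq (V 1))ˣ) : Module.End Kq (V 1)) *
          (D.dm 1 ∘ₗ D.dp 1) *
          ((D.z 1 1 ^ m : (Module.End Kq (V 1))ˣ) : Module.End Kq (V 1))) -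
        tv • (((D.z 1 1 ^ k : (Module.End Kq (V 1))ˣ) : Module.End Kq (V 1)) *
          (D.dm 1 ∘ₗ D.dp 1) *
          ((D.z 1 1 ^ (m + 1) : (Module.End Kq (V 1))ˣ) : Module.End Kq (V 1))) := by
    rw [e1, e2, Units.val_mul, Units.val_mul, expand _, hkey, expand2 _]
  -- the right-hand side middle operator on V₂
  have hcomm : Commute (D.z 2 1) (D.z 2 2) :=
    D.z_comm 2 1 2 le_rfl one_le_two one_le_two le_rfl
  have hW1 : (D.z 2 1 ^ (k + 1) : (Module.End Kq (V 2))ˣ) = D.z 2 1 * D.z 2 1 ^ k := by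
    rw [add_comm, zpow_add, zpow_one]
  have hW2 : (D.z 2 2 ^ (m + 1) : (Module.End Kq (V 2))ˣ) = D.z 2 2 * D.z 2 2 ^ m := by
    rw [add_comm, zpow_add, zpow_one]
  have hcomm' : (D.z 2 1 ^ k : (Module.End Kq (V 2))ˣ) * D.z 2 2 =
      D.z 2 2 * D.z 2 1 ^ k := (hcomm.zpow_left k)
  have hRHSmid :
      ((qv⁻¹ • (D.z 2 1 : Module.End Kq (V 2)) - tv • (D.z 2 2 : Module.End Kq (V 2))) *
        ((D.z 2 1 ^ k : (Module.End Kq (V 2))ˣ) : Module.End Kq (V 2)) *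
        ((D.z 2 2 ^ m : (Module.End Kq (V 2))ˣ) : Module.End Kq (V 2))) =
      qv⁻¹ • (((D.z 2 1 ^ (k + 1) : (Module.End Kq (V 2))ˣ) : Module.End Kq (V 2)) *
          ((D.z 2 2 ^ m : (Module.End Kq (V 2))ˣ) : Module.End Kq (V 2))) -
        tv • (((D.z 2 1 ^ k : (Module.End Kq (V 2))ˣ) : Module.End Kq (V 2)) *
          ((D.z 2 2 ^ (m + 1) : (Module.End Kq (V 2))ˣ) : Module.End Kq (V 2))) := by
    have hcv : ((D.z 2 1 ^ k : (Module.End Kq (V 2))ˣ) : Module.End Kq (V 2)) *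
        (D.z 2 2 : Module.End Kq (V 2)) =
        (D.z 2 2 : Module.End Kq (V 2)) *
        ((D.z 2 1 ^ k : (Module.End Kq (V 2))ˣ) : Module.End Kq (V 2)) := by
      rw [← Units.val_mul, ← Units.val_mul, hcomm']
    rw [hW1, hW2, Units.val_mul, Units.val_mul, sub_mul, sub_mul, smul_mul_assoc,
      smul_mul_assoc, smul_mul_assoc, smul_mul_assoc]
    rw [← hcv]
    simp only [mul_assoc]
  -- assemble
  have final := congrArg (fun X : Module.End Kq (V 1) => D.dm 0 ∘ₗ (X ∘ₗ D.dp 0)) hinner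
  simp only [LinearMap.comp_sub, LinearMap.sub_comp, LinearMap.comp_smul,
    LinearMap.smul_comp] at final
  rw [hB (k + 1) m, hB k (m + 1)] at final
  rw [hZA (k + 1) m, hZA k (m + 1), hRHSmid, final]
  simp only [LinearMap.comp_sub, LinearMap.sub_comp, LinearMap.comp_smul, LinearMap.smul_comp]

end
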